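/- Let k be a positive integer, r an odd positive integer, and l = 3^(k−1)·r. Then N = 2^k·(2^l + 1)/3^k − 1 is a positive integer (i.e., 3^k divides 2^l + 1), and if N is odd, the (l+k)-th iterate of the accelerated Collatz map T applied to N equals 1. -/
import Mathlib


def T (n : ℕ) : ℕ := if n % 2 = 0 then n / 2 else (3 * n + 1) / 2

lemma Tstep (a : ℕ) (ha : 0 < a) : T (2 * a - 1) = 3 * a - 1 := by
  simp only [T]
  have h1 : (2 * a - 1) % 2 = 1 := by omega
  rw [h1]
  simp only [if_neg (by omega : ¬ (1 = 0))]
  omega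

lemma Tpow2 (j : ℕ) : T^[j] (2 ^ j) = 1 := by
  induction j with
  | zero => simp [T]
  | succ j ih =>
    rw [Function.iterate_succ_apply]
    have : T (2 ^ (j+1)) = 2 ^ j := by
      simp [T, pow_succ, Nat.mul_mod]
    rw [this, ih]

lemma Todd (j : ℕ) : ∀ m : ℕ, 0 < m → T^[j] (2 ^ j * m - 1) = 3 ^ j * m - 1 := by
  induction j with
  | zero => intro m hm; simp
  | succ j ih =>
    intro m hm
    rw [Function.iterate_succ_apply]
    have h3 : 2 ^ (j+1) * m = 2 * (2 ^ j * m) := by ring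
    have h4 : 0 < 2 ^ j * m := by positivity
    rw [h3, Tstep _ h4]
    have h5 : 3 * (2 ^ j * m) - 1 = 2 ^ j * (3 * m) - 1 := by ring_nf
    rw [h5, ih (3 * m) (by omega)]
    congr 1
    ring

theorem stmt7 (k r l : ℕ) (hk : 0 < k) (hr : 0 < r) (hrodd : Odd r)
    (hl : l = 3 ^ (k - 1) * r) (N : ℕ) (hN : N = 2 ^ k * (2 ^ l + 1) / 3 ^ k - 1) :
    3 ^ k ∣ 2 ^ l + 1 ∧ (Odd N → T^[l + k] N = 1) := by
  haveI : Fact (Nat.Prime 3) := ⟨by norm_num⟩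
  have hlodd : Odd l := by
    rw [hl]; exact (Odd.pow (⟨1, rfl⟩ : Odd 3)).mul hrodd
  have hdvd : 3 ^ k ∣ 2 ^ l + 1 := by
    have h31 : (3 : ℕ) ∣ 2 + 1 := by norm_num
    have h32 : ¬ (3 : ℕ) ∣ 2 := by norm_num
    have key := padicValNat.pow_add_pow (p := 3) (x := 2) (y := 1)
      (⟨1, rfl⟩ : Odd 3) h31 h32 hlodd
    simp only [one_pow] at key
    have hv3 : padicValNat 3 (2 + 1) = 1 := by
      show padicValNat 3 3 = 1
      exact padicValNat.self (by norm_num)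
    have hvl : k - 1 ≤ padicValNat 3 l := by
      rw [hl, padicValNat.mul (by positivity) (by omega), padicValNat.prime_pow]
      omega
    have hk' : k ≤ padicValNat 3 (2 ^ l + 1) := by
      rw [key, hv3]; omega
    calc 3 ^ k ∣ 3 ^ padicValNat 3 (2 ^ l + 1) := pow_dvd_pow 3 hk'
      _ ∣ 2 ^ l + 1 := pow_padicValNat_dvd
  refine ⟨hdvd, fun _ => ?_⟩
  obtain ⟨m, hm⟩ := hdvd
  have hm0 : 0 < m := by
    rcases Nat.eq_zero_or_pos m with h | h
    · simp [h] at hm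
    · exact h
  have hNm : N = 2 ^ k * m - 1 := by
    rw [hN, hm, show 2 ^ k * (3 ^ k * m) = 3 ^ k * (2 ^ k * m) by ring,
      Nat.mul_div_cancel_left _ (by positivity)]
  rw [hNm, Function.iterate_add_apply, Todd k m hm0,
    show 3 ^ k * m - 1 = 2 ^ l by rw [← hm]; simp]
  exact Tpow2 l
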